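/- Let ρ₀ > 0, μ ≠ 0, and b ∈ ℝ, and define ρ(θ,ψ) = ρ₀ e^{μθ + bψ}. Then the surface defined by ρ is not equiangular: there is no β such that the angle between N(θ,ψ) and X(θ,ψ) equals β for all θ ∈ ℝ and all ψ ∈ (−π/2, π/2). -/

import Mathlib

open Real

/-- The surface map `X(θ,ψ) = ρ(θ,ψ)·(cos ψ cos θ, cos ψ sin θ, sin ψ)`. -/
noncomputable def Xsurf (ρ : ℝ → ℝ → ℝ) (θ ψ : ℝ) : EuclideanSpace ℝ (Fin 3) :=
  WithLp.toLp 2 ![ρ θ ψ * Real.cos ψ * Real.cos θ, ρ θ ψ * Real.cos ψ * Real.sin θ, ρ θ ψ * Real.sin ψ]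

/-- The normal vector `N = X_θ × X_ψ`. -/
noncomputable def Nsurf (ρ : ℝ → ℝ → ℝ) (θ ψ : ℝ) : EuclideanSpace ℝ (Fin 3) :=
  WithLp.toLp 2 (crossProduct (deriv (fun t => Xsurf ρ t ψ) θ) (deriv (fun s => Xsurf ρ θ s) ψ))

/-!
For any polar radius `ρ`, write `X = ρ u` with `u` on the unit sphere. Then
`X_θ = ρ_θ u + ρ u_θ` and `X_ψ = ρ_ψ u + ρ u_ψ`, where `u, u_θ / cos ψ, u_ψ` is an orthonormal
frame, so `⟪N, X⟫ = ρ³ cos ψ` and `‖N‖ = |ρ| √(ρ_θ² + (ρ_ψ² + ρ²) cos² ψ)`. For the self-similar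
radius, `ρ_θ = μ ρ` and `ρ_ψ = b ρ`, hence `cos ∠(N, X) = cos ψ / √(μ² + (b² + 1) cos² ψ)`.
When `μ ≠ 0` this is injective in `cos ψ > 0`, so the angle differs at `ψ = 0` and `ψ = π / 3`.
-/

open InnerProductGeometry Matrix

theorem EuclideanSpace.norm_toLp_eq_sqrt_dotProduct {ι : Type*} [Fintype ι] (v : ι → ℝ) :
    ‖WithLp.toLp 2 v‖ = √(v ⬝ᵥ v) := by
  rw [norm_eq_sqrt_real_inner, EuclideanSpace.inner_toLp_toLp, star_trivial]

section PolarSurface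

variable {ρ : ℝ → ℝ → ℝ} {θ ψ r : ℝ}

theorem hasDerivAt_Xsurf_fst (h : HasDerivAt (ρ · ψ) r θ) :
    HasDerivAt (fun t => (Xsurf ρ t ψ).ofLp)
      ![r * cos ψ * cos θ - ρ θ ψ * cos ψ * sin θ, r * cos ψ * sin θ + ρ θ ψ * cos ψ * cos θ,
        r * sin ψ] θ := by
  refine hasDerivAt_pi.2 fun i => ?_
  fin_cases i <;>
    simp only [Fin.zero_eta, Fin.mk_one, Fin.reduceFinMk, Fin.isValue, cons_val_zero, cons_val_one,
      cons_val]
  · exact ((h.mul_const _).fun_mul (hasDerivAt_cos θ)).congr_deriv (by ring)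
  · exact ((h.mul_const _).fun_mul (hasDerivAt_sin θ)).congr_deriv (by ring)
  · exact h.mul_const _

theorem hasDerivAt_Xsurf_snd (h : HasDerivAt (ρ θ) r ψ) :
    HasDerivAt (fun s => (Xsurf ρ θ s).ofLp)
      ![(r * cos ψ - ρ θ ψ * sin ψ) * cos θ, (r * cos ψ - ρ θ ψ * sin ψ) * sin θ,
        r * sin ψ + ρ θ ψ * cos ψ] ψ := by
  refine hasDerivAt_pi.2 fun i => ?_
  fin_cases i <;>
    simp only [Fin.zero_eta, Fin.mk_one, Fin.reduceFinMk, Fin.isValue, cons_val_zero, cons_val_one,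
      cons_val]
  · exact ((h.fun_mul (hasDerivAt_cos ψ)).mul_const _).congr_deriv (by ring)
  · exact ((h.fun_mul (hasDerivAt_cos ψ)).mul_const _).congr_deriv (by ring)
  · exact (h.fun_mul (hasDerivAt_sin ψ)).congr_deriv (by ring)

variable {q : ℝ}

theorem Nsurf_eq_cross (h₁ : HasDerivAt (ρ · ψ) r θ) (h₂ : HasDerivAt (ρ θ) q ψ) :
    Nsurf ρ θ ψ = WithLp.toLp 2
      (![r * cos ψ * cos θ - ρ θ ψ * cos ψ * sin θ, r * cos ψ * sin θ + ρ θ ψ * cos ψ * cos θ,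
          r * sin ψ] ⨯₃
        ![(q * cos ψ - ρ θ ψ * sin ψ) * cos θ, (q * cos ψ - ρ θ ψ * sin ψ) * sin θ,
          q * sin ψ + ρ θ ψ * cos ψ]) := by
  rw [Nsurf, (hasDerivAt_Xsurf_fst h₁).deriv, (hasDerivAt_Xsurf_snd h₂).deriv]

theorem inner_Nsurf_Xsurf (h₁ : HasDerivAt (ρ · ψ) r θ) (h₂ : HasDerivAt (ρ θ) q ψ) :
    inner ℝ (Nsurf ρ θ ψ) (Xsurf ρ θ ψ) = ρ θ ψ ^ 3 * cos ψ := by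
  rw [Nsurf_eq_cross h₁ h₂, Xsurf, EuclideanSpace.inner_toLp_toLp, star_trivial, cross_apply,
    vec3_dotProduct]
  simp only [Fin.isValue, cons_val_zero, cons_val_one, cons_val_two, tail_cons, head_cons]
  linear_combination ρ θ ψ ^ 3 * cos ψ *
    ((cos ψ ^ 2 + sin ψ ^ 2) * sin_sq_add_cos_sq θ + sin_sq_add_cos_sq ψ)

theorem norm_Xsurf : ‖Xsurf ρ θ ψ‖ = |ρ θ ψ| := by
  rw [Xsurf, EuclideanSpace.norm_toLp_eq_sqrt_dotProduct, vec3_dotProduct, ← sqrt_sq_eq_abs]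
  simp only [Fin.isValue, cons_val_zero, cons_val_one, cons_val_two, tail_cons, head_cons]
  congr 1
  linear_combination ρ θ ψ ^ 2 * (cos ψ ^ 2 * sin_sq_add_cos_sq θ + sin_sq_add_cos_sq ψ)

theorem norm_Nsurf (h₁ : HasDerivAt (ρ · ψ) r θ) (h₂ : HasDerivAt (ρ θ) q ψ) :
    ‖Nsurf ρ θ ψ‖ = |ρ θ ψ| * √(r ^ 2 + (q ^ 2 + ρ θ ψ ^ 2) * cos ψ ^ 2) := by
  rw [Nsurf_eq_cross h₁ h₂, EuclideanSpace.norm_toLp_eq_sqrt_dotProduct, cross_dot_cross,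
    ← sqrt_sq_eq_abs, ← sqrt_mul (sq_nonneg _)]
  set p := ρ θ ψ
  set A : Fin 3 → ℝ :=
    ![r * cos ψ * cos θ - p * cos ψ * sin θ, r * cos ψ * sin θ + p * cos ψ * cos θ, r * sin ψ]
  set B : Fin 3 → ℝ :=
    ![(q * cos ψ - p * sin ψ) * cos θ, (q * cos ψ - p * sin ψ) * sin θ, q * sin ψ + p * cos ψ]
  have hAA : A ⬝ᵥ A = r ^ 2 + p ^ 2 * cos ψ ^ 2 := by
    simp only [A, vec3_dotProduct, Fin.isValue, cons_val_zero, cons_val_one, cons_val_two,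
      tail_cons, head_cons]
    linear_combination (r ^ 2 + p ^ 2) * cos ψ ^ 2 * sin_sq_add_cos_sq θ +
      r ^ 2 * sin_sq_add_cos_sq ψ
  have hBB : B ⬝ᵥ B = q ^ 2 + p ^ 2 := by
    simp only [B, vec3_dotProduct, Fin.isValue, cons_val_zero, cons_val_one, cons_val_two,
      tail_cons, head_cons]
    linear_combination (q * cos ψ - p * sin ψ) ^ 2 * sin_sq_add_cos_sq θ +
      (q ^ 2 + p ^ 2) * sin_sq_add_cos_sq ψ
  have hAB : A ⬝ᵥ B = r * q := by
    simp only [A, B, vec3_dotProduct, Fin.isValue, cons_val_zero, cons_val_one, cons_val_two,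
      tail_cons, head_cons]
    linear_combination r * cos ψ * (q * cos ψ - p * sin ψ) * sin_sq_add_cos_sq θ +
      r * q * sin_sq_add_cos_sq ψ
  rw [hAA, hBB, hAB, dotProduct_comm B A, hAB]
  congr 1
  ring

theorem cos_angle_Nsurf_Xsurf (h₁ : HasDerivAt (ρ · ψ) r θ) (h₂ : HasDerivAt (ρ θ) q ψ) :
    cos (angle (Nsurf ρ θ ψ) (Xsurf ρ θ ψ)) =
      ρ θ ψ * cos ψ / √(r ^ 2 + (q ^ 2 + ρ θ ψ ^ 2) * cos ψ ^ 2) := by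
  rw [cos_angle, inner_Nsurf_Xsurf h₁ h₂, norm_Nsurf h₁ h₂, norm_Xsurf, mul_right_comm,
    abs_mul_abs_self]
  rcases eq_or_ne (ρ θ ψ) 0 with h0 | h0
  · simp [h0]
  · field_simp

end PolarSurface

theorem cos_angle_Nsurf_Xsurf_selfSimilar {ρ₀ : ℝ} (μ b : ℝ) (hρ₀ : 0 < ρ₀) (θ ψ : ℝ) :
    cos (angle (Nsurf (fun θ ψ => ρ₀ * exp (μ * θ + b * ψ)) θ ψ)
        (Xsurf (fun θ ψ => ρ₀ * exp (μ * θ + b * ψ)) θ ψ)) =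
      cos ψ / √(μ ^ 2 + (b ^ 2 + 1) * cos ψ ^ 2) := by
  have h₁ : HasDerivAt (fun t => ρ₀ * exp (μ * t + b * ψ)) (μ * (ρ₀ * exp (μ * θ + b * ψ))) θ :=
    ((((hasDerivAt_id' θ).const_mul μ).add_const _).exp.const_mul ρ₀).congr_deriv (by ring)
  have h₂ : HasDerivAt (fun s => ρ₀ * exp (μ * θ + b * s)) (b * (ρ₀ * exp (μ * θ + b * ψ))) ψ :=
    ((((hasDerivAt_id' ψ).const_mul b).const_add _).exp.const_mul ρ₀).congr_deriv (by ring)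
  rw [cos_angle_Nsurf_Xsurf h₁ h₂]
  have hp : 0 < ρ₀ * exp (μ * θ + b * ψ) := by positivity
  rw [show ∀ p : ℝ, (μ * p) ^ 2 + ((b * p) ^ 2 + p ^ 2) * cos ψ ^ 2 =
      p ^ 2 * (μ ^ 2 + (b ^ 2 + 1) * cos ψ ^ 2) from fun p => by ring,
    sqrt_mul (sq_nonneg _), sqrt_sq hp.le, mul_div_mul_left _ _ hp.ne']

theorem injOn_div_sqrt_add_mul_sq {a k : ℝ} (ha : 0 < a) (hk : 0 ≤ k) :
    Set.InjOn (fun c => c / √(a + k * c ^ 2)) (Set.Ioi 0) := by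
  intro c₁ hc₁ c₂ hc₂ h
  have hpos : ∀ c : ℝ, 0 < a + k * c ^ 2 := fun c => by positivity
  have hsq := congrArg (· ^ 2) h
  simp only [div_pow, sq_sqrt (hpos _).le] at hsq
  rw [div_eq_div_iff (hpos _).ne' (hpos _).ne'] at hsq
  have hsq' : c₁ ^ 2 = c₂ ^ 2 := mul_left_cancel₀ ha.ne' (by linear_combination hsq)
  exact (sq_eq_sq₀ (le_of_lt hc₁) (le_of_lt hc₂)).1 hsq'

/-- A self-similar surface `ρ(θ,ψ) = ρ₀ e^{μθ + bψ}` with `μ ≠ 0` is not equiangular: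
there is no `β` such that the angle between `N` and `X` equals `β` at every point of the
strip `ℝ × (−π/2, π/2)`. -/
theorem selfSimilar_not_equiangular (ρ₀ μ b : ℝ) (hρ₀ : 0 < ρ₀) (hμ : μ ≠ 0) :
    ¬ ∃ β : ℝ, ∀ θ : ℝ, ∀ ψ ∈ Set.Ioo (-(π / 2)) (π / 2),
      InnerProductGeometry.angle
        (Nsurf (fun θ ψ => ρ₀ * Real.exp (μ * θ + b * ψ)) θ ψ)
        (Xsurf (fun θ ψ => ρ₀ * Real.exp (μ * θ + b * ψ)) θ ψ) = β := by
  rintro ⟨β, hβ⟩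
  have hcos : ∀ ψ ∈ Set.Ioo (-(π / 2)) (π / 2),
      cos ψ / √(μ ^ 2 + (b ^ 2 + 1) * cos ψ ^ 2) = cos β := fun ψ hψ => by
    rw [← cos_angle_Nsurf_Xsurf_selfSimilar μ b hρ₀ 0 ψ, hβ 0 ψ hψ]
  have h₀ : (0 : ℝ) ∈ Set.Ioo (-(π / 2)) (π / 2) := ⟨by linarith [pi_pos], by linarith [pi_pos]⟩
  have h₃ : π / 3 ∈ Set.Ioo (-(π / 2)) (π / 2) := ⟨by linarith [pi_pos], by linarith [pi_pos]⟩
  have heq := injOn_div_sqrt_add_mul_sq (by positivity : 0 < μ ^ 2) (by positivity)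
    (cos_pos_of_mem_Ioo h₀) (cos_pos_of_mem_Ioo h₃) ((hcos 0 h₀).trans (hcos _ h₃).symm)
  norm_num [cos_pi_div_three] at heq
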